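/- arXiv:1311.3610 — 2 statements merged into one kernel-verified Lean document; each statement's English description precedes it below -/
import Mathlib

section
/- Let (G,I,O) be an open graph with |I| = |O| that admits a flow (f,≺). Then: (a) f is injective; (b) for each input i ∈ I, the iterates i, f(i), f²(i), … are pairwise distinct, each consecutive pair is adjacent in G, and the sequence reaches an output vertex after finitely many steps; (c) the flow wires of distinct inputs are vertex-disjoint; (d) every vertex of V lies on exactly one flow wire, so the flow wires partition V into |I| paths from inputs to outputs; (e) each flow wire is an induced path of G: two vertices lying on the same flow wire are adjacent in G if and only if they are consecutive on the wire. -/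
open Finset

variable {V : Type*} [Fintype V] [DecidableEq V]

/-- A flow on an open graph `(G,I,O)`: a map `f : O^c → I^c` together with a strict
partial order `r` on `V` such that for every non-output vertex `i`:
(f1) `f(i)` is adjacent to `i`; (f2) `i ≺ f(i)`; (f3) every `k ≠ i` adjacent to `f(i)`
satisfies `i ≺ k`. -/
def IsFlow (G : SimpleGraph V) [DecidableRel G.Adj] (I O : Finset V)
    (f : V → V) (r : V → V → Prop) : Prop :=
  IsIrrefl V r ∧ IsTrans V r ∧
    ∀ i ∉ O, f i ∉ I ∧ G.Adj i (f i) ∧ r i (f i) ∧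
      ∀ k, k ≠ i → G.Adj k (f i) → r i k

/-- `t` is an index on the flow wire of `i`: no strictly earlier iterate of `f` on `i`
has yet reached an output (so the wire, which stops at the first output reached, is
`{f^[t] i : WireIdx f O i t}`). -/
def WireIdx (f : V → V) (O : Finset V) (i : V) (t : ℕ) : Prop :=
  ∀ s < t, f^[s] i ∉ O

/-- `v` lies on the flow wire of `i` (the sequence `i, f(i), f²(i), …` stopped at the
first output vertex reached). -/
def OnWire (f : V → V) (O : Finset V) (i : V) (v : V) : Prop :=
  ∃ t, WireIdx f O i t ∧ f^[t] i = v

/-!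
Along a wire the order strictly increases by (f2), so a wire never revisits a vertex and, `V`
being finite, it reaches an output. If `f i = f j` with `i ≠ j`, then (f1) and (f3) give both
`i ≺ j` and `j ≺ i`, so `f` is injective on `Oᶜ`; as `|Oᶜ| = |Iᶜ|` it is a bijection onto `Iᶜ`.
Hence every non-input vertex has an `f`-preimage below it in the well-founded order `≺`, and
descending from any vertex ends at an input whose wire contains it; injectivity of `f` makes
that wire unique. A chord between `f^[s] i` and `f^[t+1] i` with `s < t` would make `f^[s] i` a
neighbour of `f (f^[t] i)`, so (f3) gives `f^[t] i ≺ f^[s] i`, against monotonicity.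
-/

section Wire

variable {α : Type*} {f : α → α} {O : Finset α} {i : α}

theorem wireIdx_zero : WireIdx f O i 0 := fun _ hs => absurd hs (Nat.not_lt_zero _)

theorem WireIdx.mono {s t : ℕ} (ht : WireIdx f O i t) (hst : s ≤ t) : WireIdx f O i s :=
  fun u hu => ht u (hu.trans_le hst)

theorem wireIdx_succ_iff {t : ℕ} : WireIdx f O i (t + 1) ↔ WireIdx f O i t ∧ f^[t] i ∉ O := by
  simp only [WireIdx, Nat.forall_lt_succ_right]

theorem onWire_self : OnWire f O i i := ⟨0, wireIdx_zero, rfl⟩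

theorem OnWire.apply {u : α} (hu : OnWire f O i u) (huO : u ∉ O) : OnWire f O i (f u) := by
  obtain ⟨t, ht, rfl⟩ := hu
  exact ⟨t + 1, wireIdx_succ_iff.2 ⟨ht, huO⟩, Function.iterate_succ_apply' f t i⟩

end Wire

namespace IsFlow

variable {α : Type*} {G : SimpleGraph α} [DecidableRel G.Adj] {I O : Finset α} {f : α → α}
  {r : α → α → Prop}

theorem irrefl (h : IsFlow G I O f r) (a : α) : ¬ r a a := h.1.irrefl a

theorem trans (h : IsFlow G I O f r) {a b c : α} (hab : r a b) (hbc : r b c) : r a c :=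
  h.2.1.trans a b c hab hbc

theorem asymm (h : IsFlow G I O f r) {a b : α} (hab : r a b) : ¬ r b a :=
  fun hba => h.irrefl a (h.trans hab hba)

theorem apply_notMem_inputs (h : IsFlow G I O f r) {i : α} (hi : i ∉ O) : f i ∉ I :=
  (h.2.2 i hi).1

theorem adj_apply (h : IsFlow G I O f r) {i : α} (hi : i ∉ O) : G.Adj i (f i) :=
  (h.2.2 i hi).2.1

theorem rel_apply (h : IsFlow G I O f r) {i : α} (hi : i ∉ O) : r i (f i) :=
  (h.2.2 i hi).2.2.1

theorem rel_of_adj_apply (h : IsFlow G I O f r) {i k : α} (hi : i ∉ O) (hki : k ≠ i)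
    (hk : G.Adj k (f i)) : r i k :=
  (h.2.2 i hi).2.2.2 k hki hk

theorem injOn (h : IsFlow G I O f r) : Set.InjOn f (↑O)ᶜ := by
  intro i hi j hj hij
  by_contra hne
  exact h.asymm (h.rel_of_adj_apply hi (Ne.symm hne) (hij ▸ h.adj_apply hj))
    (h.rel_of_adj_apply hj hne (hij ▸ h.adj_apply hi))

theorem rel_iterate (h : IsFlow G I O f r) {i : α} {s t : ℕ} (hst : s < t)
    (ht : WireIdx f O i t) : r (f^[s] i) (f^[t] i) := by
  induction t with
  | zero => exact absurd hst (Nat.not_lt_zero s)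
  | succ t ih =>
    obtain ⟨ht, htO⟩ := wireIdx_succ_iff.1 ht
    have hstep : r (f^[t] i) (f^[t + 1] i) := by
      rw [Function.iterate_succ_apply']
      exact h.rel_apply htO
    rcases Nat.lt_succ_iff_lt_or_eq.1 hst with hlt | rfl
    · exact h.trans (ih hlt ht) hstep
    · exact hstep

theorem iterate_ne (h : IsFlow G I O f r) {i : α} {s t : ℕ} (hst : s ≠ t)
    (hs : WireIdx f O i s) (ht : WireIdx f O i t) : f^[s] i ≠ f^[t] i := by
  intro heq
  rcases hst.lt_or_gt with hlt | hgt
  · exact h.irrefl _ (heq ▸ h.rel_iterate hlt ht)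
  · exact h.irrefl _ (heq ▸ h.rel_iterate hgt hs)

theorem exists_iterate_mem [Finite α] (h : IsFlow G I O f r) (i : α) : ∃ t, f^[t] i ∈ O := by
  by_contra! hnone
  obtain ⟨s, t, hst, heq⟩ := Finite.exists_ne_map_eq_of_infinite fun t : ℕ => f^[t] i
  exact h.iterate_ne hst (fun u _ => hnone u) (fun u _ => hnone u) heq

theorem adj_iterate_succ (h : IsFlow G I O f r) {i : α} {t : ℕ} (ht : f^[t] i ∉ O) :
    G.Adj (f^[t] i) (f^[t + 1] i) := by
  rw [Function.iterate_succ_apply']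
  exact h.adj_apply ht

theorem not_adj_iterate (h : IsFlow G I O f r) {i : α} {s t : ℕ} (hst : s < t)
    (ht : WireIdx f O i (t + 1)) : ¬ G.Adj (f^[s] i) (f^[t + 1] i) := by
  obtain ⟨ht, htO⟩ := wireIdx_succ_iff.1 ht
  rw [Function.iterate_succ_apply']
  intro hadj
  exact h.asymm (h.rel_iterate hst ht)
    (h.rel_of_adj_apply htO (h.iterate_ne hst.ne (ht.mono hst.le) ht) hadj)

theorem adj_iterate_iff (h : IsFlow G I O f r) {i : α} {s t : ℕ} (hs : WireIdx f O i s)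
    (ht : WireIdx f O i t) : G.Adj (f^[s] i) (f^[t] i) ↔ t = s + 1 ∨ s = t + 1 := by
  constructor
  · intro hadj
    by_contra hne
    rcases lt_trichotomy s t with hlt | rfl | hgt
    · obtain ⟨u, rfl⟩ : ∃ u, t = u + 1 := ⟨t - 1, by omega⟩
      exact h.not_adj_iterate (by omega) ht hadj
    · exact hadj.ne rfl
    · obtain ⟨u, rfl⟩ : ∃ u, s = u + 1 := ⟨s - 1, by omega⟩
      exact h.not_adj_iterate (by omega) hs hadj.symm
  · rintro (rfl | rfl)
    · exact h.adj_iterate_succ (wireIdx_succ_iff.1 ht).2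
    · exact (h.adj_iterate_succ (wireIdx_succ_iff.1 hs).2).symm

theorem iterate_succ_notMem_inputs (h : IsFlow G I O f r) {i : α} {t : ℕ}
    (ht : WireIdx f O i (t + 1)) : f^[t + 1] i ∉ I := by
  rw [Function.iterate_succ_apply']
  exact h.apply_notMem_inputs (wireIdx_succ_iff.1 ht).2

theorem eq_of_iterate_eq (h : IsFlow G I O f r) {i j : α} (hi : i ∈ I) (hj : j ∈ I)
    {s t : ℕ} (hs : WireIdx f O i s) (ht : WireIdx f O j t) (heq : f^[s] i = f^[t] j) :
    i = j := by
  induction s generalizing t with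
  | zero =>
    cases t with
    | zero => exact heq
    | succ t => exact absurd (heq ▸ hi) (h.iterate_succ_notMem_inputs ht)
  | succ s ih =>
    cases t with
    | zero => exact absurd (heq.symm ▸ hj) (h.iterate_succ_notMem_inputs hs)
    | succ t =>
      obtain ⟨hs, hsO⟩ := wireIdx_succ_iff.1 hs
      obtain ⟨ht, htO⟩ := wireIdx_succ_iff.1 ht
      simp only [Function.iterate_succ_apply'] at heq
      exact ih hs ht (h.injOn hsO htO heq)

theorem eq_of_onWire (h : IsFlow G I O f r) {i j v : α} (hi : i ∈ I) (hj : j ∈ I)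
    (hiv : OnWire f O i v) (hjv : OnWire f O j v) : i = j := by
  obtain ⟨s, hs, rfl⟩ := hiv
  obtain ⟨t, ht, heq⟩ := hjv
  exact h.eq_of_iterate_eq hi hj hs ht heq.symm

theorem surjOn [Fintype α] [DecidableEq α] (h : IsFlow G I O f r) (hIO : I.card = O.card) : Set.SurjOn f (↑O)ᶜ (↑I)ᶜ := by
  rw [← Finset.coe_compl, ← Finset.coe_compl]
  refine Finset.surjOn_of_injOn_of_card_le f (fun i hi => ?_) ?_ ?_
  · simpa using h.apply_notMem_inputs (by simpa using hi)
  · rw [Finset.coe_compl]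
    exact h.injOn
  · rw [card_compl, card_compl, hIO]

theorem wellFounded [Finite α] (h : IsFlow G I O f r) : WellFounded r :=
  haveI := h.1
  haveI := h.2.1
  Finite.wellFounded_of_trans_of_irrefl r

theorem exists_onWire [Fintype α] [DecidableEq α] (h : IsFlow G I O f r) (hIO : I.card = O.card) (v : α) :
    ∃ i ∈ I, OnWire f O i v := by
  induction v using h.wellFounded.induction with
  | _ v ih =>
    by_cases hv : v ∈ I
    · exact ⟨v, hv, onWire_self⟩
    · obtain ⟨u, hu, rfl⟩ := h.surjOn hIO hv
      obtain ⟨i, hi, hiu⟩ := ih u (h.rel_apply hu)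
      exact ⟨i, hi, hiu.apply hu⟩

end IsFlow

/-- Let `(G,I,O)` be an open graph with `|I| = |O|` admitting a flow
`(f,≺)`.  Then: (a) `f` is injective (on the measured vertices `O^c`); (b) for each
input `i ∈ I`, the iterates `i, f(i), f²(i), …` of the flow wire are pairwise
distinct, each consecutive pair is adjacent in `G`, and the sequence reaches an output
vertex after finitely many steps; (c) the flow wires of distinct inputs are
vertex-disjoint; (d) every vertex of `V` lies on exactly one flow wire, so the flow
wires partition `V` into `|I|` paths from inputs to outputs; (e) each flow wire is an
induced path of `G`: two vertices on the same flow wire are adjacent in `G` iff they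
are consecutive on the wire. -/
theorem flow_wires_structure (G : SimpleGraph V) [DecidableRel G.Adj]
    (I O : Finset V) (f : V → V) (r : V → V → Prop)
    (hflow : IsFlow G I O f r) (hIO : I.card = O.card) :
    -- (a) `f` is injective
    (∀ i ∉ O, ∀ j ∉ O, f i = f j → i = j)
    -- (b) each wire consists of pairwise distinct vertices, consecutive vertices are
    -- adjacent, and the wire reaches an output after finitely many steps
    ∧ (∀ i ∈ I,
        (∃ t, f^[t] i ∈ O)
        ∧ (∀ s t, WireIdx f O i s → WireIdx f O i t → s ≠ t → f^[s] i ≠ f^[t] i)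
        ∧ (∀ t, WireIdx f O i (t + 1) → G.Adj (f^[t] i) (f^[t + 1] i)))
    -- (c) wires of distinct inputs are vertex-disjoint
    ∧ (∀ i ∈ I, ∀ j ∈ I, i ≠ j → ∀ v, OnWire f O i v → ¬ OnWire f O j v)
    -- (d) every vertex lies on exactly one flow wire
    ∧ (∀ v : V, ∃! i, i ∈ I ∧ OnWire f O i v)
    -- (e) each wire is an induced path
    ∧ (∀ i ∈ I, ∀ s t, WireIdx f O i s → WireIdx f O i t →
        (G.Adj (f^[s] i) (f^[t] i) ↔ (t = s + 1 ∨ s = t + 1))) := by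
  refine ⟨hflow.injOn, fun i _ => ⟨?_, ?_, ?_⟩, ?_, ?_, fun i _ s t => hflow.adj_iterate_iff⟩
  · exact hflow.exists_iterate_mem i
  · exact fun s t hs ht hst => hflow.iterate_ne hst hs ht
  · exact fun t ht => hflow.adj_iterate_succ (wireIdx_succ_iff.1 ht).2
  · exact fun i hi j hj hij v hiv hjv => hij (hflow.eq_of_onWire hi hj hiv hjv)
  · intro v
    obtain ⟨i, hi, hiv⟩ := hflow.exists_onWire hIO v
    exact ⟨i, ⟨hi, hiv⟩, fun j ⟨hj, hjv⟩ => hflow.eq_of_onWire hj hi hjv hiv⟩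
end

section
/- Let (G,I,O) be an open graph with |I| = |O| = m admitting a flow (f,≺), and let P_1, …, P_m be the flow wires of the inputs (which partition V). Order V by concatenating the wires: first the vertices of P_1 in wire order, then P_2, and so on. Let C_F := max over 1 ≤ w < m of the number of edges of G with one endpoint in P_1 ∪ … ∪ P_w and the other in P_{w+1} ∪ … ∪ P_m. Then for every k, the number of edges of G with exactly one endpoint among the first k vertices of this order is at most 1 + 2·C_F. -/
open Finset

variable {V : Type*} [Fintype V] [DecidableEq V]

/-- `l` is the list of vertices of the flow wire of `i`: the sequence
`i, f(i), f²(i), …` stopped at the first output vertex reached. -/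
def IsWireList (f : V → V) (O : Finset V) (i : V) (l : List V) : Prop :=
  l ≠ [] ∧ (∀ t (ht : t < l.length), l.get ⟨t, ht⟩ = f^[t] i) ∧
    (∀ t < l.length - 1, f^[t] i ∉ O) ∧ f^[l.length - 1] i ∈ O

open scoped Classical in
/-- The number of edges of `G` with one endpoint in `A` and the other in `B`. -/
noncomputable def crossBetween (G : SimpleGraph V) [DecidableRel G.Adj]
    (A B : Finset V) : ℕ :=
  (G.edgeFinset.filter fun e =>
    Sym2.lift ⟨fun i j => (i ∈ A ∧ j ∈ B) ∨ (i ∈ B ∧ j ∈ A),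
      fun i j => propext (by tauto)⟩ e).card

/-- The number of edges of `G` crossing the cut `(A, Aᶜ)`, i.e. having exactly one
endpoint in `A`. -/
noncomputable def crossCount (G : SimpleGraph V) [DecidableRel G.Adj] (A : Finset V) : ℕ :=
  crossBetween G A Aᶜ

set_option linter.unusedSectionVars false
section lemmas
variable {G : SimpleGraph V} [DecidableRel G.Adj] {I O : Finset V} {f : V → V}
  {r : V → V → Prop} (hflow : IsFlow G I O f r)

include hflow

lemma flow_chain {i : V} {s t : ℕ} (hst : s < t) (hO : ∀ u < t, f^[u] i ∉ O) :
    r (f^[s] i) (f^[t] i) := by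
  obtain ⟨hirr, htr, hf⟩ := hflow
  induction t with
  | zero => omega
  | succ t ih =>
    have hOt : f^[t] i ∉ O := hO t (by omega)
    have hstep : r (f^[t] i) (f^[t+1] i) := by
      rw [Function.iterate_succ_apply']
      exact (hf _ hOt).2.2.1
    rcases Nat.lt_or_ge s t with h | h
    · exact htr.trans _ _ _ (ih h (fun u hu => hO u (by omega))) hstep
    · have : s = t := by omega
      subst this; exact hstep

lemma flow_ne {i : V} {s t : ℕ} (hst : s < t) (hO : ∀ u < t, f^[u] i ∉ O) :
    f^[s] i ≠ f^[t] i := by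
  intro h
  exact hflow.1.irrefl _ (h ▸ flow_chain hflow hst hO)

lemma flow_inj {a b : V} (ha : a ∉ O) (hb : b ∉ O) (hab : f a = f b) : a = b := by
  obtain ⟨hirr, htr, hf⟩ := hflow
  by_contra hne
  have hba : G.Adj b (f a) := by have := (hf b hb).2.1; rwa [← hab] at this
  have hab' : G.Adj a (f b) := by have := (hf a ha).2.1; rwa [hab] at this
  have h1 : r a b := (hf a ha).2.2.2 b (Ne.symm hne) hba
  have h2 : r b a := (hf b hb).2.2.2 a hne hab'
  exact hirr.irrefl a (htr.trans _ _ _ h1 h2)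

lemma flow_not_adj {i : V} {s t : ℕ} (hst : s + 1 < t) (hO : ∀ u < t, f^[u] i ∉ O) :
    ¬ G.Adj (f^[s] i) (f^[t] i) := by
  obtain ⟨hirr, htr, hf⟩ := hflow
  intro hadj
  obtain ⟨t', rfl⟩ : ∃ t', t = t' + 1 := ⟨t - 1, by omega⟩
  have hOt : f^[t'] i ∉ O := hO t' (by omega)
  have hlt : r (f^[s] i) (f^[t'] i) :=
    flow_chain ⟨hirr, htr, hf⟩ (by omega) (fun u hu => hO u (by omega))
  have hne : f^[s] i ≠ f^[t'] i := flow_ne ⟨hirr, htr, hf⟩ (by omega) (fun u hu => hO u (by omega))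
  have hadj' : G.Adj (f^[s] i) (f (f^[t'] i)) := by
    rwa [Function.iterate_succ_apply'] at hadj
  have : r (f^[t'] i) (f^[s] i) := (hf _ hOt).2.2.2 _ hne hadj'
  exact hirr.irrefl _ (htr.trans _ _ _ hlt this)

lemma flow_wire_disjoint {i j : V} (hi : i ∈ I) (hj : j ∈ I) (hij : i ≠ j)
    {s t : ℕ} (hs : WireIdx f O i s) (ht : WireIdx f O j t) :
    f^[s] i ≠ f^[t] j := by
  obtain ⟨hirr, htr, hf⟩ := hflow
  induction s generalizing t with
  | zero =>
    cases t with
    | zero => simpa using hij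
    | succ t' =>
      intro h
      have hOt : f^[t'] j ∉ O := ht t' (by omega)
      have hni : f (f^[t'] j) ∉ I := (hf _ hOt).1
      rw [Function.iterate_succ_apply'] at h
      simp only [Function.iterate_zero, id_eq] at h
      exact hni (h ▸ hi)
  | succ s' ih =>
    cases t with
    | zero =>
      intro h
      have hOs : f^[s'] i ∉ O := hs s' (by omega)
      have hni : f (f^[s'] i) ∉ I := (hf _ hOs).1
      rw [Function.iterate_succ_apply'] at h
      simp only [Function.iterate_zero, id_eq] at h
      exact hni (h.symm ▸ hj)
    | succ t' =>
      intro h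
      rw [Function.iterate_succ_apply', Function.iterate_succ_apply'] at h
      have := flow_inj ⟨hirr, htr, hf⟩ (hs s' (by omega)) (ht t' (by omega)) h
      exact ih (fun u hu => hs u (by omega)) (t := t') (fun u hu => ht u (by omega)) this

lemma flow_surj (hIO : I.card = O.card) {v : V} (hv : v ∉ I) :
    ∃ u, u ∉ O ∧ f u = v := by
  classical
  obtain ⟨hirr, htr, hf⟩ := hflow
  have hinj : Set.InjOn f (Oᶜ : Finset V) := by
    intro a ha b hb hab
    exact flow_inj ⟨hirr, htr, hf⟩ (by simpa using ha) (by simpa using hb) hab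
  have hsub : (Oᶜ : Finset V).image f ⊆ Iᶜ := by
    intro x hx
    simp only [mem_image] at hx
    obtain ⟨a, ha, rfl⟩ := hx
    simpa using (hf a (by simpa using ha)).1
  have hcard : ((Oᶜ : Finset V).image f).card = (Iᶜ : Finset V).card := by
    rw [Finset.card_image_of_injOn hinj, card_compl, card_compl, hIO]
  have heq : (Oᶜ : Finset V).image f = Iᶜ :=
    Finset.eq_of_subset_of_card_le hsub (le_of_eq hcard.symm)
  have : v ∈ (Oᶜ : Finset V).image f := heq ▸ (by simpa using hv)
  simp only [mem_image] at this
  obtain ⟨u, hu, huv⟩ := this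
  exact ⟨u, by simpa using hu, huv⟩

lemma flow_cover (hIO : I.card = O.card) (v : V) :
    ∃ i ∈ I, ∃ t, WireIdx f O i t ∧ f^[t] i = v := by
  classical
  obtain ⟨hirr, htr, hf⟩ := hflow
  generalize hn : (univ.filter fun x => r x v).card = n
  induction n using Nat.strong_induction_on generalizing v with
  | _ n ihn =>
    by_cases hv : v ∈ I
    · exact ⟨v, hv, 0, fun s hs => absurd hs (by omega), rfl⟩
    · obtain ⟨u, huO, huv⟩ := flow_surj ⟨hirr, htr, hf⟩ hIO hv
      have hruv : r u v := huv ▸ (hf u huO).2.2.1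
      have hsub : (univ.filter fun x => r x u) ⊆ (univ.filter fun x => r x v).erase u := by
        intro x hx
        simp only [mem_filter, mem_univ, true_and] at hx
        refine Finset.mem_erase.mpr ⟨?_, ?_⟩
        · rintro rfl; exact hirr.irrefl _ hx
        · simp only [mem_filter, mem_univ, true_and]
          exact htr.trans _ _ _ hx hruv
      have hlt : (univ.filter fun x => r x u).card < n := by
        have h1 := Finset.card_le_card hsub
        have h2 : ((univ.filter fun x => r x v).erase u).card <
            (univ.filter fun x => r x v).card := by
          apply Finset.card_erase_lt_of_mem
          simp only [mem_filter, mem_univ, true_and]; exact hruv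
        omega
      obtain ⟨i, hiI, t, hwt, hfe⟩ := ihn _ hlt u rfl
      refine ⟨i, hiI, t + 1, ?_, ?_⟩
      · intro s hs
        rcases Nat.lt_or_ge s t with h | h
        · exact hwt s h
        · have : s = t := by omega
          subst this; rw [hfe]; exact huO
      · rw [Function.iterate_succ_apply', hfe, huv]

end lemmas



lemma take_flatten_split {α : Type*} (ls : List (List α)) (k : ℕ) :
    ls.flatten.take k = ls.flatten ∨
    ∃ w, ∃ hw : w < ls.length, ∃ j, j < ls[w].length ∧
      ls.flatten.take k = (ls.take w).flatten ++ ls[w].take j := by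
  induction ls generalizing k with
  | nil => left; simp
  | cons a tl ih =>
    rw [List.flatten_cons]
    by_cases hk : k < a.length
    · right
      refine ⟨0, by simp, k, by simpa using hk, ?_⟩
      rw [List.take_append]
      simp [Nat.sub_eq_zero_of_le (le_of_lt hk)]
    · push_neg at hk
      rw [List.take_append, List.take_of_length_le hk]
      rcases ih (k - a.length) with h | ⟨w, hw, j, hj, h⟩
      · left; rw [h]
      · right
        refine ⟨w + 1, by simpa using hw, j, by simpa using hj, ?_⟩
        rw [h]; simp





lemma mem_take_ofFn {m : ℕ} (L : Fin m → List V) (a : ℕ) (v : V) :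
    v ∈ ((List.ofFn L).take a).flatten.toFinset ↔ ∃ w : Fin m, (w : ℕ) < a ∧ v ∈ L w := by
  simp only [List.mem_toFinset, List.mem_flatten]
  constructor
  · rintro ⟨l, hl, hv⟩
    rw [List.mem_iff_getElem] at hl
    obtain ⟨q, hq, rfl⟩ := hl
    have hq' : q < m := by simp at hq; omega
    have hqa : q < a := by simp at hq; omega
    refine ⟨⟨q, hq'⟩, hqa, ?_⟩
    rwa [List.getElem_take, List.getElem_ofFn] at hv
  · rintro ⟨w, hwa, hv⟩
    refine ⟨L w, ?_, hv⟩
    rw [List.mem_iff_getElem]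
    refine ⟨w, by simp [hwa, w.2], ?_⟩
    rw [List.getElem_take, List.getElem_ofFn]

lemma mem_drop_ofFn {m : ℕ} (L : Fin m → List V) (a : ℕ) (v : V) :
    v ∈ ((List.ofFn L).drop a).flatten.toFinset ↔ ∃ w : Fin m, a ≤ (w : ℕ) ∧ v ∈ L w := by
  simp only [List.mem_toFinset, List.mem_flatten]
  constructor
  · rintro ⟨l, hl, hv⟩
    rw [List.mem_iff_getElem] at hl
    obtain ⟨q, hq, rfl⟩ := hl
    have hq' : a + q < m := by simp at hq; omega
    refine ⟨⟨a + q, hq'⟩, by simp, ?_⟩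
    rwa [List.getElem_drop, List.getElem_ofFn] at hv
  · rintro ⟨w, hwa, hv⟩
    refine ⟨L w, ?_, hv⟩
    rw [List.mem_iff_getElem]
    have h1 : (w : ℕ) - a < ((List.ofFn L).drop a).length := by simp; omega
    refine ⟨(w : ℕ) - a, h1, ?_⟩
    rw [List.getElem_drop, List.getElem_ofFn]
    congr 1
    exact Fin.ext (by simp; omega)

lemma crossBetween_empty_left (G : SimpleGraph V) [DecidableRel G.Adj] (B : Finset V) :
    crossBetween G ∅ B = 0 := by
  classical
  rw [crossBetween, Finset.card_eq_zero, Finset.filter_eq_empty_iff]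
  intro ed _
  induction ed using Sym2.ind with
  | _ x y => simp

lemma crossBetween_empty_right (G : SimpleGraph V) [DecidableRel G.Adj] (A : Finset V) :
    crossBetween G A ∅ = 0 := by
  classical
  rw [crossBetween, Finset.card_eq_zero, Finset.filter_eq_empty_iff]
  intro ed _
  induction ed using Sym2.ind with
  | _ x y => simp

lemma cut_card_le {G : SimpleGraph V} [DecidableRel G.Adj] {A B1 B2 B3 B4 : Finset V}
    {e0 : Sym2 V}
    (h : ∀ x y, G.Adj x y → x ∈ A → y ∉ A →
      ((x ∈ B1 ∧ y ∈ B2) ∨ (x ∈ B2 ∧ y ∈ B1)) ∨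
      ((x ∈ B3 ∧ y ∈ B4) ∨ (x ∈ B4 ∧ y ∈ B3)) ∨ s(x, y) = e0) :
    crossCount G A ≤ crossBetween G B1 B2 + (crossBetween G B3 B4 + 1) := by
  classical
  have hsub : (G.edgeFinset.filter fun ed =>
        Sym2.lift ⟨fun a b => (a ∈ A ∧ b ∈ Aᶜ) ∨ (a ∈ Aᶜ ∧ b ∈ A),
          fun a b => propext (by tauto)⟩ ed) ⊆
      (G.edgeFinset.filter fun ed =>
        Sym2.lift ⟨fun a b => (a ∈ B1 ∧ b ∈ B2) ∨ (a ∈ B2 ∧ b ∈ B1),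
          fun a b => propext (by tauto)⟩ ed) ∪
      ((G.edgeFinset.filter fun ed =>
        Sym2.lift ⟨fun a b => (a ∈ B3 ∧ b ∈ B4) ∨ (a ∈ B4 ∧ b ∈ B3),
          fun a b => propext (by tauto)⟩ ed) ∪ {e0}) := by
    intro ed hed
    rw [Finset.mem_filter] at hed
    obtain ⟨hedE, hpred⟩ := hed
    induction ed using Sym2.ind with
    | _ x y =>
      have hadj : G.Adj x y := by
        rw [SimpleGraph.mem_edgeFinset, SimpleGraph.mem_edgeSet] at hedE
        exact hedE
      rw [Sym2.lift_mk] at hpred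
      simp only [Finset.mem_compl] at hpred
      rcases hpred with ⟨hxA, hyA⟩ | ⟨hxA, hyA⟩
      · rcases h x y hadj hxA hyA with h1 | h1 | h1
        · exact Finset.mem_union_left _
            (Finset.mem_filter.mpr ⟨hedE, by rw [Sym2.lift_mk]; exact h1⟩)
        · exact Finset.mem_union_right _ (Finset.mem_union_left _
            (Finset.mem_filter.mpr ⟨hedE, by rw [Sym2.lift_mk]; exact h1⟩))
        · exact Finset.mem_union_right _ (Finset.mem_union_right _
            (Finset.mem_singleton.mpr h1))
      · rcases h y x hadj.symm hyA hxA with h1 | h1 | h1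
        · exact Finset.mem_union_left _
            (Finset.mem_filter.mpr ⟨hedE, by rw [Sym2.lift_mk]; tauto⟩)
        · exact Finset.mem_union_right _ (Finset.mem_union_left _
            (Finset.mem_filter.mpr ⟨hedE, by rw [Sym2.lift_mk]; tauto⟩))
        · refine Finset.mem_union_right _ (Finset.mem_union_right _
            (Finset.mem_singleton.mpr ?_))
          rw [Sym2.eq_swap] at h1
          exact h1
  simp only [crossCount, crossBetween]
  refine (Finset.card_le_card hsub).trans ?_
  refine (Finset.card_union_le _ _).trans ?_
  refine Nat.add_le_add_left ((Finset.card_union_le _ _).trans ?_) _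
  exact Nat.add_le_add_left (by simp) _

/-- Let `(G,I,O)` be an open graph with `|I| = |O| = m` admitting a
flow `(f,≺)`, and let `L 0, …, L (m-1)` be the flow wires of the (distinctly
enumerated) inputs `e 0, …, e (m-1)`, which partition `V`.  Order `V` by concatenating
the wires.  Let `C` be the largest number of edges of `G` with one endpoint in the
first `w` wires and the other in the remaining wires (over `1 ≤ w < m`).  Then for
every `k`, the number of edges of `G` with exactly one endpoint among the first `k`
vertices of this order is at most `1 + 2·C`. -/
theorem crossCount_prefix_le_of_flow (G : SimpleGraph V) [DecidableRel G.Adj]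
    (I O : Finset V) (f : V → V) (r : V → V → Prop)
    (hflow : IsFlow G I O f r) (m : ℕ) (hIm : I.card = m) (hOm : O.card = m)
    (e : Fin m → V) (he : Function.Injective e) (heI : ∀ w, e w ∈ I)
    (L : Fin m → List V) (hL : ∀ w, IsWireList f O (e w) (L w))
    (C : ℕ)
    (hC : C = (Finset.Ico 1 m).sup fun w =>
        crossBetween G ((List.ofFn L).take w).flatten.toFinset
          ((List.ofFn L).drop w).flatten.toFinset)
    (k : ℕ) :
    crossCount G (((List.ofFn L).flatten.take k).toFinset) ≤ 1 + 2 * C := by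
  classical
  -- basic wire facts
  have hget : ∀ (w : Fin m) (t : ℕ) (ht : t < (L w).length), (L w)[t] = f^[t] (e w) := by
    intro w t ht
    have := (hL w).2.1 t ht
    simpa [List.get_eq_getElem] using this
  have hmemwire : ∀ (w : Fin m) (v : V),
      v ∈ L w ↔ ∃ t, t < (L w).length ∧ f^[t] (e w) = v := by
    intro w v
    rw [List.mem_iff_getElem]
    constructor
    · rintro ⟨t, ht, rfl⟩; exact ⟨t, ht, (hget w t ht).symm⟩
    · rintro ⟨t, ht, rfl⟩; exact ⟨t, ht, hget w t ht⟩
  -- every input is some e w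
  have heImg : ∀ i ∈ I, ∃ w : Fin m, e w = i := by
    intro i hi
    have himg : (Finset.univ : Finset (Fin m)).image e = I := by
      apply Finset.eq_of_subset_of_card_le
      · intro x hx
        simp only [Finset.mem_image] at hx
        obtain ⟨w, _, rfl⟩ := hx
        exact heI w
      · rw [Finset.card_image_of_injective _ he, Finset.card_univ, Fintype.card_fin, hIm]
    rw [← himg] at hi
    simp only [Finset.mem_image, Finset.mem_univ, true_and] at hi
    exact hi
  -- coverage
  have hcover : ∀ v : V, ∃ w : Fin m, v ∈ L w := by
    intro v
    obtain ⟨i, hiI, t, hwt, hft⟩ := flow_cover hflow (hIm.trans hOm.symm) v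
    obtain ⟨w, rfl⟩ := heImg i hiI
    have hne : L w ≠ [] := (hL w).1
    have hpos : 0 < (L w).length := List.length_pos_iff.mpr hne
    have hlen : t < (L w).length := by
      by_contra h
      push_neg at h
      exact hwt ((L w).length - 1) (by omega) (hL w).2.2.2
    exact ⟨w, (hmemwire w v).mpr ⟨t, hlen, hft⟩⟩
  -- the c-bound
  have hc : ∀ a : ℕ, crossBetween G ((List.ofFn L).take a).flatten.toFinset
      ((List.ofFn L).drop a).flatten.toFinset ≤ C := by
    intro a
    rcases Nat.eq_zero_or_pos a with rfl | ha
    · simp only [List.take_zero, List.flatten_nil, List.toFinset_nil]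
      rw [crossBetween_empty_left]
      omega
    · rcases Nat.lt_or_ge a m with ham | ham
      · rw [hC]
        exact Finset.le_sup (f := fun w => crossBetween G ((List.ofFn L).take w).flatten.toFinset
          ((List.ofFn L).drop w).flatten.toFinset) (Finset.mem_Ico.mpr ⟨ha, ham⟩)
      · have : (List.ofFn L).drop a = [] :=
          List.drop_eq_nil_of_le (by rw [List.length_ofFn]; omega)
        rw [this]
        simp only [List.flatten_nil, List.toFinset_nil]
        rw [crossBetween_empty_right]
        omega
  rcases take_flatten_split (List.ofFn L) k with hfull | ⟨w, hw, j, hj, hsplit⟩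
  · -- prefix is everything: complement is empty
    rw [hfull]
    have huniv : (List.ofFn L).flatten.toFinset = Finset.univ := by
      apply Finset.eq_univ_of_forall
      intro v
      obtain ⟨w, hv⟩ := hcover v
      rw [List.mem_toFinset, List.mem_flatten]
      exact ⟨L w, by simp [List.mem_ofFn], hv⟩
    rw [crossCount, huniv, Finset.compl_univ, crossBetween_empty_right]
    omega
  · -- prefix = first w wires plus first j vertices of wire w
    have hwm : w < m := by simpa using hw
    set wf : Fin m := ⟨w, hwm⟩ with hwf
    have hwfval : (wf : ℕ) = w := rfl
    have hgw : (List.ofFn L)[w] = L wf := by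
      rw [List.getElem_ofFn]
    rw [hgw] at hj hsplit
    rw [hsplit]
    set i : V := e wf with hi
    set n : ℕ := (L wf).length with hn
    -- not-output along the wire
    have hOn : ∀ u < n - 1, f^[u] i ∉ O := (hL wf).2.2.1
    set T1 : Finset V := ((List.ofFn L).take w).flatten.toFinset with hT1
    set D1 : Finset V := ((List.ofFn L).drop w).flatten.toFinset with hD1
    set T2 : Finset V := ((List.ofFn L).take (w+1)).flatten.toFinset with hT2
    set D2 : Finset V := ((List.ofFn L).drop (w+1)).flatten.toFinset with hD2
    set Q : Finset V := ((L wf).take j).toFinset with hQ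
    set A : Finset V := T1 ∪ Q with hA
    have hAeq : (((List.ofFn L).take w).flatten ++ (L wf).take j).toFinset = A := by
      rw [List.toFinset_append]
    rw [hAeq]
    set e0 : Sym2 V := s(f^[j-1] i, f^[j] i) with he0
    -- the per-edge case analysis
    have aux : ∀ x y : V, G.Adj x y → x ∈ A → y ∉ A →
        ((x ∈ T1 ∧ y ∈ D1) ∨ (x ∈ D1 ∧ y ∈ T1)) ∨
        ((x ∈ T2 ∧ y ∈ D2) ∨ (x ∈ D2 ∧ y ∈ T2)) ∨ s(x, y) = e0 := by
      intro x y hadj hx hy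
      obtain ⟨wy, hyL⟩ := hcover y
      have hyT1 : (wy : ℕ) < w → False := by
        intro h
        exact hy (Finset.mem_union_left _ ((mem_take_ofFn L w y).mpr ⟨wy, h, hyL⟩))
      rcases Finset.mem_union.mp hx with hxT | hxQ
      · -- x in an earlier wire
        left; left
        refine ⟨hxT, (mem_drop_ofFn L w y).mpr ⟨wy, ?_, hyL⟩⟩
        by_contra h
        exact hyT1 (by omega)
      · -- x on wire wf, position s < j
        rw [hQ, List.mem_toFinset, List.mem_iff_getElem] at hxQ
        obtain ⟨s, hs, hxe⟩ := hxQ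
        rw [List.getElem_take] at hxe
        have hsj : s < j := by simp only [List.length_take] at hs; omega
        have hsn : s < n := by simp only [List.length_take] at hs; omega
        rw [hget wf s hsn] at hxe
        have hxLw : x ∈ L wf := (hmemwire wf x).mpr ⟨s, hsn, hxe⟩
        rcases lt_trichotomy (wy : ℕ) w with hlt | heq | hgt
        · exact absurd (hyT1 hlt) (by simp)
        · -- same wire
          have : wy = wf := Fin.ext heq
          subst this
          obtain ⟨t, htn, hye⟩ := (hmemwire wf y).mp hyL
          have htj : j ≤ t := by
            by_contra h
            push_neg at h
            apply hy
            apply Finset.mem_union_right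
            rw [hQ, List.mem_toFinset, List.mem_iff_getElem]
            refine ⟨t, by simp only [List.length_take]; omega, ?_⟩
            rw [List.getElem_take, hget wf t htn, hye]
          have hnadj : ¬ (s + 1 < t) := by
            intro hc'
            apply flow_not_adj hflow hc' (fun u hu => hOn u (by omega))
            rw [hxe, hye]
            exact hadj
          have hts : t = s + 1 := by omega
          have hjt : j = t := by omega
          right; right
          rw [← hxe, ← hye, he0]
          have h1 : s = j - 1 := by omega
          have h2 : t = j := by omega
          rw [h1, h2]
        · -- later wire
          right; left; left
          constructor
          · exact (mem_take_ofFn L (w+1) x).mpr ⟨wf, by omega, hxLw⟩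
          · exact (mem_drop_ofFn L (w+1) y).mpr ⟨wy, by omega, hyL⟩
    have hcut := cut_card_le (G := G) (A := A) (B1 := T1) (B2 := D1) (B3 := T2) (B4 := D2)
      (e0 := e0) aux
    have h1 : crossBetween G T1 D1 ≤ C := by rw [hT1, hD1]; exact hc w
    have h2 : crossBetween G T2 D2 ≤ C := by rw [hT2, hD2]; exact hc (w+1)
    omega
end
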